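/- arXiv:math/0501322 — 5 statements merged into one kernel-verified Lean document; each statement's English description precedes it below -/
import Mathlib

section
/- For every integer r ≥ 1, the following identity holds in ℤ[q]: q^{r+2}·[r+1][r] + q^{r+1}·[r+1][r] + (q² − q)·[r+1][r]² + q²·[r+1][r]² + q·[r+1][r]² + 2q·[r+1][r]² + [r+1][r]² + q^r·[r+1][r] = P_r. (The eight summands on the left are the Serre polynomials of the strata of the moduli space of two-pointed genus-zero degree-two stable maps to ℙ^r: the strata numbered 1, 2, 3, 4, 5, the two strata of type 6, stratum 9, and the combined contribution of strata 7 and 8, whose terms ±[r+1]²[r]/[2] cancel.) -/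
open Polynomial Finset

/-- The q-integer `[n] = 1 + q + ... + q^(n-1)` in `ℤ[q]`. -/
noncomputable def qint (n : ℕ) : Polynomial ℤ := ∑ i ∈ Finset.range n, X ^ i

/-- The Poincaré polynomial `P_r` of the moduli space of two-pointed, genus-zero,
degree-two stable maps to `ℙ^r`. -/
noncomputable def P (r : ℕ) : Polynomial ℤ :=
  (∑ i ∈ Finset.range (r + 1), (X : Polynomial ℤ) ^ i) *
    (∑ i ∈ Finset.range r, (X : Polynomial ℤ) ^ i) *
    ((∑ i ∈ Finset.range (r + 3), (X : Polynomial ℤ) ^ i) +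
      2 * ∑ i ∈ Finset.Icc 1 (r + 1), (X : Polynomial ℤ) ^ i +
      2 * ∑ i ∈ Finset.Icc 2 r, (X : Polynomial ℤ) ^ i)

lemma range_sum_eq (n : ℕ) : (∑ i ∈ Finset.range n, (X : Polynomial ℤ) ^ i) = qint n := rfl

lemma qint_succ (n : ℕ) : qint (n + 1) = qint n + X ^ n := by
  simp [qint, Finset.sum_range_succ]

lemma icc_sum (a b : ℕ) (h : a ≤ b + 1) :
    (∑ i ∈ Finset.Icc a b, (X : Polynomial ℤ) ^ i) = qint (b + 1) - qint a := by
  rw [← Finset.Ico_add_one_right_eq_Icc, Finset.sum_Ico_eq_sub _ h, range_sum_eq, range_sum_eq]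

/-- The sum of the Serre polynomials of the strata equals the Poincaré polynomial
of `\overline{M}_{0,2}(ℙ^r, 2)`. -/
theorem strata_sum (r : ℕ) (hr : 1 ≤ r) :
    X ^ (r + 2) * (qint (r + 1) * qint r) + X ^ (r + 1) * (qint (r + 1) * qint r) +
      (X ^ 2 - X) * (qint (r + 1) * qint r ^ 2) + X ^ 2 * (qint (r + 1) * qint r ^ 2) +
      X * (qint (r + 1) * qint r ^ 2) + 2 * X * (qint (r + 1) * qint r ^ 2) +
      qint (r + 1) * qint r ^ 2 + X ^ r * (qint (r + 1) * qint r) = P r := by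
  have h1 : (∑ i ∈ Finset.Icc 1 (r + 1), (X : Polynomial ℤ) ^ i) = qint (r + 2) - qint 1 :=
    icc_sum 1 (r + 1) (by omega)
  have h2 : (∑ i ∈ Finset.Icc 2 r, (X : Polynomial ℤ) ^ i) = qint (r + 1) - qint 2 :=
    icc_sum 2 r (by omega)
  rw [P, h1, h2, range_sum_eq, range_sum_eq, range_sum_eq]
  have q1 : qint 1 = 1 := by simp [qint]
  have q2 : qint 2 = 1 + X := by simp [qint, Finset.sum_range_succ]
  have e3 : qint (r + 3) = qint r + X ^ r + X ^ (r + 1) + X ^ (r + 2) := by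
    rw [show r + 3 = (r + 2) + 1 from rfl, qint_succ, show r + 2 = (r + 1) + 1 from rfl,
      qint_succ, qint_succ]
  have e2 : qint (r + 2) = qint r + X ^ r + X ^ (r + 1) := by
    rw [show r + 2 = (r + 1) + 1 from rfl, qint_succ, qint_succ]
  have e1 : qint (r + 1) = qint r + X ^ r := qint_succ r
  have h : (X : Polynomial ℤ) ^ r = (X - 1) * qint r + 1 := by
    have hg := geom_sum_mul (X : Polynomial ℤ) r
    unfold qint
    linear_combination -hg
  rw [e1, e2, e3, q1, q2]
  linear_combination ((-2 : Polynomial ℤ) * X * qint r * X ^ r - 4 * qint r * X ^ r -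
    2 * X * qint r ^ 2 - 4 * qint r ^ 2) * h
end

section
/- Let r ≥ 1 be an integer, let β_j be the coefficient of q^j in P_r, and let α_i be the coefficient of q^i in [r+1]·[r]. Then for every integer j with 2r+1 ≤ j ≤ 3r+1: β_j = ∑_{i=j-r-2}^{2r-1} α_i + 2∑_{i=j-r-1}^{2r-1} α_i + 2∑_{i=j-r}^{2r-1} α_i. -/
/-!
`P_r` is `F · (1 + ⋯ + q^(r+2) + 2(q + ⋯ + q^(r+1)) + 2(q² + ⋯ + q^r))` with `F = [r+1]·[r]` of
degree `2r - 1`. The coefficient of `q^j` in `F · (q^a + ⋯ + q^b)` is `∑_{k=j-b}^{j-a} F_k`, and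
for `j ≥ a + 2r - 1` the terms with `k > 2r - 1` vanish, leaving the tail sums of the formula.
-/

open Polynomial Finset

theorem natDegree_qint_le (n : ℕ) : (qint n).natDegree ≤ n - 1 :=
  natDegree_sum_le_of_forall_le _ _ fun i hi => by
    rw [natDegree_X_pow]
    exact Nat.le_sub_one_of_lt (mem_range.mp hi)

theorem natDegree_qint_mul_qint_le (r : ℕ) : (qint (r + 1) * qint r).natDegree ≤ 2 * r - 1 :=
  natDegree_mul_le.trans <| by
    have := add_le_add (natDegree_qint_le (r + 1)) (natDegree_qint_le r)
    omega

theorem coeff_mul_sum_Icc_X_pow {R : Type*} [Semiring R] {F : R[X]} {a b d j : ℕ}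
    (hF : F.natDegree ≤ d) (had : a + d ≤ j) (hb : b ≤ j) :
    (F * ∑ i ∈ Icc a b, X ^ i).coeff j = ∑ k ∈ Icc (j - b) d, F.coeff k := by
  calc (F * ∑ i ∈ Icc a b, X ^ i).coeff j
      = ∑ i ∈ Icc a b, F.coeff (j - i) := by
        rw [mul_sum, finsetSum_coeff]
        refine sum_congr rfl fun i hi => ?_
        rw [coeff_mul_X_pow', if_pos ((mem_Icc.mp hi).2.trans hb)]
    _ = ∑ k ∈ Icc (j - b) (j - a), F.coeff k := by
        refine sum_nbij' (j - ·) (j - ·) ?_ ?_ ?_ ?_ fun _ _ => rfl <;>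
          · intro i hi
            simp only [mem_Icc] at hi ⊢
            omega
    _ = ∑ k ∈ Icc (j - b) d, F.coeff k := by
        refine (sum_subset (Icc_subset_Icc_right (by omega)) fun k hk hkd => ?_).symm
        refine coeff_eq_zero_of_natDegree_lt (hF.trans_lt ?_)
        simp only [mem_Icc] at hk hkd
        omega

theorem P_eq_qint_mul_qint_mul (r : ℕ) :
    P r = qint (r + 1) * qint r * ∑ i ∈ Icc 0 (r + 2), X ^ i +
      2 * (qint (r + 1) * qint r * ∑ i ∈ Icc 1 (r + 1), X ^ i) +
      2 * (qint (r + 1) * qint r * ∑ i ∈ Icc 2 r, X ^ i) := by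
  rw [P, qint, qint, Nat.range_succ_eq_Icc_zero (r + 2)]
  ring

theorem betti_high_general (r j : ℕ) (hr : 1 ≤ r) (hj1 : 2 * r + 1 ≤ j) :
    (P r).coeff j =
      (∑ i ∈ Finset.Icc (j - r - 2) (2 * r - 1), (qint (r + 1) * qint r).coeff i) +
      2 * (∑ i ∈ Finset.Icc (j - r - 1) (2 * r - 1), (qint (r + 1) * qint r).coeff i) +
      2 * (∑ i ∈ Finset.Icc (j - r) (2 * r - 1), (qint (r + 1) * qint r).coeff i) := by
  have hF := natDegree_qint_mul_qint_le r
  rw [P_eq_qint_mul_qint_mul, coeff_add, coeff_add, coeff_ofNat_mul, coeff_ofNat_mul,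
    coeff_mul_sum_Icc_X_pow hF (by omega) (by omega),
    coeff_mul_sum_Icc_X_pow hF (by omega) (by omega),
    coeff_mul_sum_Icc_X_pow hF (by omega) (by omega), Nat.sub_sub, Nat.sub_sub]

/-- Formula for the Betti numbers `β_j` of `\overline{M}_{0,2}(ℙ^r, 2)` for `2r+1 ≤ j ≤ 3r+1`. -/
theorem betti_high (r j : ℕ) (hr : 1 ≤ r) (hj1 : 2 * r + 1 ≤ j) (hj2 : j ≤ 3 * r + 1) :
    (P r).coeff j =
      (∑ i ∈ Finset.Icc (j - r - 2) (2 * r - 1), (qint (r + 1) * qint r).coeff i) +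
      2 * (∑ i ∈ Finset.Icc (j - r - 1) (2 * r - 1), (qint (r + 1) * qint r).coeff i) +
      2 * (∑ i ∈ Finset.Icc (j - r) (2 * r - 1), (qint (r + 1) * qint r).coeff i) :=
  betti_high_general r j hr hj1
end

section
/- Let r ≥ 1 be an integer and let β_j be the coefficient of q^j in P_r. Then for every integer j with 0 ≤ j < r: β_j = (5/2)j² + (3/2)j + 1, i.e. 2·β_j = 5j² + 3j + 2. -/
open Polynomial Finset

lemma coeff_range_sum (n k : ℕ) :
    (∑ i ∈ Finset.range n, (X : Polynomial ℤ) ^ i).coeff k = if k < n then 1 else 0 := by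
  simp [Polynomial.finset_sum_coeff, Polynomial.coeff_X_pow]

lemma coeff_Icc_sum (a b k : ℕ) :
    (∑ i ∈ Finset.Icc a b, (X : Polynomial ℤ) ^ i).coeff k =
      if a ≤ k ∧ k ≤ b then 1 else 0 := by
  simp [Polynomial.finset_sum_coeff, Polynomial.coeff_X_pow, Finset.sum_ite_eq', Finset.mem_Icc]

lemma coeff_AB (r k : ℕ) (hk : k < r) :
    ((∑ i ∈ Finset.range (r + 1), (X : Polynomial ℤ) ^ i) *
      (∑ i ∈ Finset.range r, (X : Polynomial ℤ) ^ i)).coeff k = (k : ℤ) + 1 := by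
  rw [Polynomial.coeff_mul, Finset.Nat.sum_antidiagonal_eq_sum_range_succ_mk]
  have : ∀ i ∈ Finset.range (k + 1),
      (∑ i ∈ Finset.range (r + 1), (X : Polynomial ℤ) ^ i).coeff i *
      (∑ i ∈ Finset.range r, (X : Polynomial ℤ) ^ i).coeff (k - i) = 1 := by
    intro i hi
    rw [Finset.mem_range] at hi
    rw [coeff_range_sum, coeff_range_sum, if_pos (by omega), if_pos (by omega)]
    ring
  rw [Finset.sum_congr rfl this]
  simp

lemma coeff_C_factor (r m : ℕ) (hm : m < r) :
    ((∑ i ∈ Finset.range (r + 3), (X : Polynomial ℤ) ^ i) +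
      2 * ∑ i ∈ Finset.Icc 1 (r + 1), (X : Polynomial ℤ) ^ i +
      2 * ∑ i ∈ Finset.Icc 2 r, (X : Polynomial ℤ) ^ i).coeff m =
    1 + 2 * (if 1 ≤ m then 1 else 0) + 2 * (if 2 ≤ m then 1 else 0) := by
  have h2 : (2 : Polynomial ℤ) = Polynomial.C 2 := by norm_num
  rw [Polynomial.coeff_add, Polynomial.coeff_add, h2, Polynomial.coeff_C_mul,
    Polynomial.coeff_C_mul, coeff_range_sum, coeff_Icc_sum, coeff_Icc_sum,
    if_pos (by omega)]
  congr 2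
  · by_cases h : 1 ≤ m
    · rw [if_pos ⟨h, by omega⟩, if_pos h]
    · rw [if_neg (by omega), if_neg h]
  · by_cases h : 2 ≤ m
    · rw [if_pos ⟨h, by omega⟩, if_pos h]
    · rw [if_neg (by omega), if_neg h]

lemma gauss (n : ℕ) : 2 * ∑ i ∈ Finset.range n, ((i : ℤ) + 1) = n * (n + 1) := by
  induction n with
  | zero => simp
  | succ k ih => rw [Finset.sum_range_succ, mul_add, ih]; push_cast; ring

lemma sum_trunc (m n : ℕ) (hm : m ≤ n) (f : ℕ → ℤ) :
    ∑ i ∈ Finset.range n, (if i < m then f i else 0) = ∑ i ∈ Finset.range m, f i := by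
  rw [← Finset.sum_subset (Finset.range_subset_range.mpr hm)
    (fun i _ hi => if_neg (by simpa using hi))]
  exact Finset.sum_congr rfl fun i hi => if_pos (Finset.mem_range.mp hi)

/-- For `j < r`, the `j`-th Betti number of `\overline{M}_{0,2}(ℙ^r, 2)` is
`(5/2)j² + (3/2)j + 1`, i.e. `2β_j = 5j² + 3j + 2`. -/
theorem betti_explicit_low (r j : ℕ) (hr : 1 ≤ r) (hj : j < r) :
    2 * (P r).coeff j = 5 * (j : ℤ) ^ 2 + 3 * (j : ℤ) + 2 := by
  rw [P, Polynomial.coeff_mul, Finset.Nat.sum_antidiagonal_eq_sum_range_succ_mk]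
  have hterm : ∀ i ∈ Finset.range (j + 1),
      ((∑ i ∈ Finset.range (r + 1), (X : Polynomial ℤ) ^ i) *
        (∑ i ∈ Finset.range r, (X : Polynomial ℤ) ^ i)).coeff i *
      ((∑ i ∈ Finset.range (r + 3), (X : Polynomial ℤ) ^ i) +
        2 * ∑ i ∈ Finset.Icc 1 (r + 1), (X : Polynomial ℤ) ^ i +
        2 * ∑ i ∈ Finset.Icc 2 r, (X : Polynomial ℤ) ^ i).coeff (j - i) =
      (((i : ℤ) + 1) + ((if i < j then 2 * ((i : ℤ) + 1) else 0) +
        (if i < j - 1 then 2 * ((i : ℤ) + 1) else 0))) := by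
    intro i hi
    rw [Finset.mem_range] at hi
    rw [coeff_AB r i (by omega), coeff_C_factor r (j - i) (by omega)]
    have e1 : (1 ≤ j - i) = (i < j) := by
      apply propext; omega
    have e2 : (2 ≤ j - i) = (i < j - 1) := by
      apply propext; omega
    simp only [e1, e2]
    by_cases h1 : i < j <;> by_cases h2 : i < j - 1 <;> simp [h1, h2] <;> ring
  rw [Finset.sum_congr rfl hterm]
  simp only [Finset.sum_add_distrib, sum_trunc j (j + 1) (by omega),
    sum_trunc (j - 1) (j + 1) (by omega), ← Finset.mul_sum]
  have g1 := gauss (j + 1)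
  have g2 := gauss j
  have g3 := gauss (j - 1)
  rw [Finset.sum_add_distrib] at g1 g2 g3
  rcases Nat.eq_zero_or_pos j with h0 | h1
  · subst h0; simp
  · have hc : ((j - 1 : ℕ) : ℤ) = (j : ℤ) - 1 := by
      rw [Nat.cast_sub h1]; norm_num
    rw [hc] at g3
    push_cast at g1
    linear_combination g1 + 2 * g2 + 2 * g3
end

section
/- Let r ≥ 1 be an integer and let β_r be the coefficient of q^r in P_r. Then β_r = (5/2)r² + (3/2)r, i.e. 2·β_r = 5r² + 3r. -/
open Polynomial Finset

lemma coeff_sum_pow (s : Finset ℕ) (k : ℕ) :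
    (∑ i ∈ s, (X : Polynomial ℤ) ^ i).coeff k = if k ∈ s then 1 else 0 := by
  simp [Polynomial.finset_sum_coeff, Polynomial.coeff_X_pow]

lemma coeff_AB_lt (r m : ℕ) (hm : m < r) :
    ((∑ i ∈ Finset.range (r + 1), (X : Polynomial ℤ) ^ i) *
      (∑ i ∈ Finset.range r, (X : Polynomial ℤ) ^ i)).coeff m = (m : ℤ) + 1 := by
  rw [Polynomial.coeff_mul, Finset.Nat.sum_antidiagonal_eq_sum_range_succ_mk]
  simp only [coeff_sum_pow, Finset.mem_range]
  calc ∑ k ∈ Finset.range (m + 1),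
        (if k < r + 1 then (1 : ℤ) else 0) * (if m - k < r then 1 else 0)
      = ∑ _k ∈ Finset.range (m + 1), (1 : ℤ) := by
        refine Finset.sum_congr rfl fun k hk => ?_
        rw [Finset.mem_range] at hk
        rw [if_pos (by omega), if_pos (by omega), one_mul]
    _ = (m : ℤ) + 1 := by simp

lemma coeff_AB_eq (r : ℕ) (hr : 1 ≤ r) :
    ((∑ i ∈ Finset.range (r + 1), (X : Polynomial ℤ) ^ i) *
      (∑ i ∈ Finset.range r, (X : Polynomial ℤ) ^ i)).coeff r = (r : ℤ) := by
  rw [Polynomial.coeff_mul, Finset.Nat.sum_antidiagonal_eq_sum_range_succ_mk]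
  simp only [coeff_sum_pow, Finset.mem_range]
  rw [Finset.sum_range_succ']
  have h0 : (if (0:ℕ) < r + 1 then (1:ℤ) else 0) * (if r - 0 < r then 1 else 0) = 0 := by
    rw [show r - 0 = r from rfl, if_neg (lt_irrefl r), mul_zero]
  rw [h0, add_zero]
  calc ∑ k ∈ Finset.range r,
        (if k + 1 < r + 1 then (1 : ℤ) else 0) * (if r - (k + 1) < r then 1 else 0)
      = ∑ _k ∈ Finset.range r, (1 : ℤ) := by
        refine Finset.sum_congr rfl fun k hk => ?_
        rw [Finset.mem_range] at hk
        rw [if_pos (by omega), if_pos (by omega), one_mul]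
    _ = (r : ℤ) := by simp

lemma coeff_Cpart (r j : ℕ) (hj : j ≤ r) :
    ((∑ i ∈ Finset.range (r + 3), (X : Polynomial ℤ) ^ i) +
      2 * ∑ i ∈ Finset.Icc 1 (r + 1), (X : Polynomial ℤ) ^ i +
      2 * ∑ i ∈ Finset.Icc 2 r, (X : Polynomial ℤ) ^ i).coeff j
      = if j = 0 then 1 else if j = 1 then 3 else 5 := by
  have h2 : (2 : Polynomial ℤ) = Polynomial.C 2 := by norm_num
  rw [Polynomial.coeff_add, Polynomial.coeff_add, h2, Polynomial.coeff_C_mul,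
    Polynomial.coeff_C_mul, coeff_sum_pow, coeff_sum_pow, coeff_sum_pow]
  simp only [Finset.mem_range, Finset.mem_Icc]
  rcases Nat.eq_zero_or_pos j with rfl | hj1
  · norm_num
  rcases Nat.lt_or_ge j 2 with hj2 | hj2
  · have : j = 1 := by omega
    subst this
    rw [if_pos (by omega), if_pos (by omega), if_neg (by omega)]
    norm_num
  · rw [if_pos (by omega), if_pos (by omega), if_pos (by omega),
      if_neg (by omega), if_neg (by omega)]
    norm_num

lemma aux_gauss (s : ℕ) : 2 * ∑ k ∈ Finset.range s, ((k : ℤ) + 1) = s * (s + 1) := by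
  induction s with
  | zero => simp
  | succ n ih =>
    rw [Finset.sum_range_succ]
    push_cast
    push_cast at ih
    nlinarith [ih]

/-- The `r`-th Betti number of `\overline{M}_{0,2}(ℙ^r, 2)` is `(5/2)r² + (3/2)r`,
i.e. `2β_r = 5r² + 3r`. -/
theorem betti_explicit_r (r : ℕ) (hr : 1 ≤ r) :
    2 * (P r).coeff r = 5 * (r : ℤ) ^ 2 + 3 * (r : ℤ) := by
  obtain ⟨s, rfl⟩ : ∃ s, r = s + 1 := ⟨r - 1, by omega⟩
  rw [P, Polynomial.coeff_mul, Finset.Nat.sum_antidiagonal_eq_sum_range_succ_mk]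
  rw [show s + 1 + 1 = (s + 1) + 1 from rfl, Finset.sum_range_succ, Finset.sum_range_succ]
  rw [coeff_AB_eq (s+1) (by omega), coeff_AB_lt (s+1) s (by omega)]
  rw [show s + 1 - (s + 1) = 0 from by omega, show s + 1 - s = 1 from by omega]
  rw [coeff_Cpart (s+1) 0 (by omega), coeff_Cpart (s+1) 1 (by omega)]
  have hsum : ∑ k ∈ Finset.range s,
      ((∑ i ∈ Finset.range (s + 1 + 1), (X : Polynomial ℤ) ^ i) *
        (∑ i ∈ Finset.range (s + 1), (X : Polynomial ℤ) ^ i)).coeff k *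
      (((∑ i ∈ Finset.range (s + 1 + 3), (X : Polynomial ℤ) ^ i) +
        2 * ∑ i ∈ Finset.Icc 1 (s + 1 + 1), (X : Polynomial ℤ) ^ i +
        2 * ∑ i ∈ Finset.Icc 2 (s + 1), (X : Polynomial ℤ) ^ i).coeff (s + 1 - k))
      = ∑ k ∈ Finset.range s, ((k : ℤ) + 1) * 5 := by
    refine Finset.sum_congr rfl fun k hk => ?_
    rw [Finset.mem_range] at hk
    rw [coeff_AB_lt (s+1) k (by omega), coeff_Cpart (s+1) (s+1-k) (by omega),
      if_neg (by omega), if_neg (by omega)]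
  rw [hsum, ← Finset.sum_mul]
  norm_num
  have := aux_gauss s
  push_cast
  push_cast at this
  nlinarith [this]
end

section
/- Fix an integer j ≥ 0. For all integers r, s with r > j and s > j, the coefficient of q^j in P_r equals the coefficient of q^j in P_s; that is, the j-th Betti number of the moduli space of two-pointed, genus-zero, degree-two stable maps to ℙ^r stabilizes for r > j (to the limiting value (5/2)j² + (3/2)j + 1). -/
/-!
In `ℤ⟦q⟧` every q-integer is a truncated geometric series, `[n] = (1 - qⁿ) / (1 - q)`, so it
agrees with `1 / (1 - q)` modulo `qⁿ`. Hence every factor of `P_r` agrees modulo `q^r` with its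
limit, and `P_r ≡ (1 + 2q + 2q²) / (1 - q)³ (mod q^r)`. The coefficient of `q^j` in this series is
`C(j+2, 2) + 2 C(j+1, 2) + 2 C(j, 2) = (5j² + 3j + 2) / 2`.
-/

open Polynomial Finset

open scoped PowerSeries

theorem Finset.sum_Icc_pow_eq_pow_mul_sum_range {M : Type*} [Semiring M] (x : M) (a b : ℕ) :
    ∑ i ∈ Icc a b, x ^ i = x ^ a * ∑ i ∈ range (b + 1 - a), x ^ i := by
  rw [← Finset.Ico_add_one_right_eq_Icc, sum_Ico_eq_sum_range, mul_sum]
  simp only [pow_add]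

namespace PowerSeries

variable {R : Type*} [CommRing R]

theorem geom_sum_X_eq (n : ℕ) : ∑ i ∈ range n, (X : R⟦X⟧) ^ i = (1 - X ^ n) * mk 1 := by
  calc ∑ i ∈ range n, (X : R⟦X⟧) ^ i
      = ((1 - X) * ∑ i ∈ range n, (X : R⟦X⟧) ^ i) * mk 1 := by
        rw [mul_comm (1 - X), mul_assoc, mul_comm (1 - X), mk_one_mul_one_sub_eq_one, mul_one]
    _ = (1 - X ^ n) * mk 1 := by rw [mul_neg_geom_sum]

theorem X_pow_mul_geom_sum_smodEq {a n m : ℕ} (h : m ≤ a + n) :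
    X ^ a * ∑ i ∈ range n, (X : R⟦X⟧) ^ i ≡ X ^ a * mk 1 [SMOD Ideal.span {X ^ m}] := by
  rw [SModEq.sub_mem, Ideal.mem_span_singleton, geom_sum_X_eq,
    show X ^ a * ((1 - X ^ n) * mk 1) - X ^ a * mk 1 = -(X ^ (a + n) * mk (1 : ℕ → R)) by ring]
  exact (dvd_mul_of_dvd_left (pow_dvd_pow X h) _).neg_right

theorem geom_sum_X_smodEq {n m : ℕ} (h : m ≤ n) :
    ∑ i ∈ range n, (X : R⟦X⟧) ^ i ≡ mk 1 [SMOD Ideal.span {X ^ m}] := by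
  simpa using X_pow_mul_geom_sum_smodEq (R := R) (a := 0) (by omega : m ≤ 0 + n)

theorem sum_Icc_X_pow_smodEq {a b m : ℕ} (h : m ≤ b + 1) :
    ∑ i ∈ Icc a b, (X : R⟦X⟧) ^ i ≡ X ^ a * mk 1 [SMOD Ideal.span {X ^ m}] := by
  rw [sum_Icc_pow_eq_pow_mul_sum_range]
  exact X_pow_mul_geom_sum_smodEq (by omega)

end PowerSeries

noncomputable def stableBettiSeries : ℤ⟦X⟧ :=
  PowerSeries.mk 1 ^ 3 * (1 + 2 * PowerSeries.X + 2 * PowerSeries.X ^ 2)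

open PowerSeries in
theorem coe_P_smodEq (r : ℕ) :
    (P r : ℤ⟦X⟧) ≡ stableBettiSeries [SMOD Ideal.span {PowerSeries.X ^ r}] := by
  have hA := geom_sum_X_smodEq (R := ℤ) (n := r + 1) (m := r) (by omega)
  have hB := geom_sum_X_smodEq (R := ℤ) (n := r) (m := r) le_rfl
  have hC := geom_sum_X_smodEq (R := ℤ) (n := r + 3) (m := r) (by omega)
  have hD := sum_Icc_X_pow_smodEq (R := ℤ) (a := 1) (b := r + 1) (m := r) (by omega)
  have hE := sum_Icc_X_pow_smodEq (R := ℤ) (a := 2) (b := r) (m := r) (by omega)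
  have hS : stableBettiSeries = PowerSeries.mk 1 * PowerSeries.mk 1 * (PowerSeries.mk 1 +
      2 * (PowerSeries.X ^ 1 * PowerSeries.mk 1) + 2 * (PowerSeries.X ^ 2 * PowerSeries.mk 1)) := by
    rw [stableBettiSeries]
    ring
  rw [hS, P]
  simp only [← Polynomial.coeToPowerSeries.ringHom_apply, map_mul, map_add, map_sum, map_pow,
    map_ofNat]
  simp only [Polynomial.coeToPowerSeries.ringHom_apply, Polynomial.coe_X]
  exact (hA.mul hB).mul ((hC.add ((SModEq.refl 2).mul hD)).add ((SModEq.refl 2).mul hE))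

theorem coeff_P_of_lt {j r : ℕ} (h : j < r) :
    (P r).coeff j = PowerSeries.coeff j stableBettiSeries := by
  have hdvd := SModEq.sub_mem.mp (coe_P_smodEq r)
  rw [Ideal.mem_span_singleton, PowerSeries.X_pow_dvd_iff] at hdvd
  rw [← Polynomial.coeff_coe, ← sub_eq_zero, ← map_sub]
  exact hdvd j h

theorem two_mul_choose_two_add_two (n : ℕ) :
    2 * ((2 + n).choose 2 : ℤ) = (n + 2) * (n + 1) := by
  have := Nat.add_one_mul_choose_eq (n + 1) 1
  rw [Nat.choose_one_right, add_assoc, add_comm] at this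
  exact_mod_cast (by linarith : 2 * (2 + n).choose 2 = (n + 2) * (n + 1))

open PowerSeries in
theorem two_mul_coeff_stableBettiSeries (j : ℕ) :
    2 * coeff j stableBettiSeries = 5 * (j : ℤ) ^ 2 + 3 * j + 2 := by
  rw [stableBettiSeries, mk_one_pow_eq_mk_choose_add ℤ 2]
  simp only [mul_add, mul_one, two_mul (_ : ℤ⟦X⟧), map_add, coeff_mk]
  rcases j with _ | _ | k
  · simp
  · simp [PowerSeries.coeff_mul_X_pow']
  · simp only [coeff_succ_mul_X, PowerSeries.coeff_mul_X_pow', coeff_mk, le_add_iff_nonneg_left,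
      zero_le, if_true]
    have h₀ := two_mul_choose_two_add_two k
    have h₁ := two_mul_choose_two_add_two (k + 1)
    have h₂ := two_mul_choose_two_add_two (k + 2)
    push_cast at h₁ h₂ ⊢
    linear_combination h₂ + 2 * h₁ + 2 * h₀

/-- For fixed `j`, the `j`-th Betti number of `\overline{M}_{0,2}(ℙ^r, 2)` stabilizes
for `r > j`, to the limiting value `(5/2)j² + (3/2)j + 1`. -/
theorem betti_stabilize (j : ℕ) :
    ∀ r s : ℕ, j < r → j < s →
      (P r).coeff j = (P s).coeff j ∧
      2 * (P r).coeff j = 5 * (j : ℤ) ^ 2 + 3 * (j : ℤ) + 2 := by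
  intro r s hr hs
  rw [coeff_P_of_lt hr, coeff_P_of_lt hs]
  exact ⟨rfl, two_mul_coeff_stableBettiSeries j⟩
end
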